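/- Fix a dimension d ≥ 1 and let μ be the uniform probability measure on the closed unit ball of EuclideanSpace ℝ (Fin d). There exists a constant c > 0, depending only on d, such that for every n ≥ 2, if X_1, …, X_n are independent random points each distributed according to μ (equivalently, integrating over the product measure μ^n), then the expected nearest-neighbour distance satisfies E[ min_{2 ≤ j ≤ n} ‖X_1 − X_j‖ ] ≥ c · n^{−1/d}. -/

import Mathlib

/-!
Fix the first point. Under the uniform measure on the unit ball of `ℝ^d`, any ball of radius `r`
has mass at most `r ^ d`, so by independence each of the other `n - 1` points lies within `r` of
the first with probability at most `r ^ d`, and by the union bound the nearest-neighbour distance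
is below `r` with probability at most `(n - 1) r ^ d`. For `r = (2n)^{-1/d}` this is at most
`1 / 2`, and Markov's inequality gives an expectation of at least `r / 2 ≥ n^{-1/d} / 4`.
-/

open MeasureTheory ProbabilityTheory Metric
open scoped ENNReal NNReal

section NearestNeighbourDist

variable {ι α : Type*} [PseudoMetricSpace α]

/-- The nearest-neighbour distance of `x i` in the configuration `x` (`0` if there is no other
point, as an empty infimum). -/
noncomputable def nnDist (x : ι → α) (i : ι) : ℝ :=
  ⨅ j : {j // j ≠ i}, dist (x i) (x j)

lemma nnDist_nonneg (x : ι → α) (i : ι) : 0 ≤ nnDist x i :=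
  Real.iInf_nonneg fun _ => dist_nonneg

lemma bddBelow_range_dist (x : ι → α) (i : ι) :
    BddBelow (Set.range fun j : {j // j ≠ i} => dist (x i) (x j)) :=
  ⟨0, Set.forall_mem_range.mpr fun _ => dist_nonneg⟩

lemma nnDist_le_dist (x : ι → α) {i j : ι} (hji : j ≠ i) : nnDist x i ≤ dist (x i) (x j) :=
  ciInf_le (bddBelow_range_dist x i) ⟨j, hji⟩

lemma exists_dist_lt_of_nnDist_lt [Nontrivial ι] {x : ι → α} {i : ι} {r : ℝ}
    (h : nnDist x i < r) : ∃ j : {j // j ≠ i}, dist (x i) (x j) < r := by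
  have : Nonempty {j // j ≠ i} := nonempty_subtype.mpr (exists_ne i)
  exact (ciInf_lt_iff (bddBelow_range_dist x i)).mp h

lemma measurable_nnDist [Countable ι] [MeasurableSpace α] [OpensMeasurableSpace α]
    [SecondCountableTopology α] (i : ι) : Measurable fun x : ι → α => nnDist x i :=
  Measurable.iInf fun j => (measurable_pi_apply i).dist (measurable_pi_apply j.1)

end NearestNeighbourDist

section IIDPoints

variable {ι α : Type*} [Fintype ι] [PseudoMetricSpace α] [MeasurableSpace α]
  [OpensMeasurableSpace α] [SecondCountableTopology α] {ν : Measure α} [IsProbabilityMeasure ν]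

lemma measure_pi_dist_lt_le {i j : ι} (hij : i ≠ j) {r : ℝ} {ε : ℝ≥0∞}
    (hball : ∀ z, ν (ball z r) ≤ ε) :
    Measure.pi (fun _ : ι => ν) {x | dist (x i) (x j) < r} ≤ ε := by
  set P := Measure.pi fun _ : ι => ν
  have hpair : P.map (fun x => (x i, x j)) = ν.prod ν := by
    have hind : IndepFun (fun x : ι → α => x i) (fun x => x j) P :=
      (iIndepFun_pi (X := fun _ => id) fun _ => aemeasurable_id).indepFun hij
    rw [(indepFun_iff_map_prod_eq_prod_map_map (measurable_pi_apply i).aemeasurable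
      (measurable_pi_apply j).aemeasurable).mp hind, (measurePreserving_eval _ i).map_eq,
      (measurePreserving_eval _ j).map_eq]
  have hS : MeasurableSet {p : α × α | dist p.1 p.2 < r} :=
    measurableSet_lt (measurable_fst.dist measurable_snd) measurable_const
  calc P {x | dist (x i) (x j) < r}
      = ν.prod ν {p : α × α | dist p.1 p.2 < r} := by
        rw [← hpair, Measure.map_apply ((measurable_pi_apply i).prodMk (measurable_pi_apply j)) hS]
        rfl
    _ = ∫⁻ a, ν (ball a r) ∂ν := by
        rw [Measure.prod_apply hS]
        congr! with a
        ext b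
        simp [dist_comm]
    _ ≤ ∫⁻ _, ε ∂ν := lintegral_mono hball
    _ = ε := by simp

lemma measure_pi_nnDist_lt_le [Nontrivial ι] (i : ι) {r : ℝ} {ε : ℝ≥0∞}
    (hball : ∀ z, ν (ball z r) ≤ ε) :
    Measure.pi (fun _ : ι => ν) {x | nnDist x i < r} ≤ (Fintype.card ι - 1 : ℕ) * ε := by
  classical
  set P := Measure.pi fun _ : ι => ν
  calc P {x | nnDist x i < r}
      ≤ P (⋃ j : {j // j ≠ i}, {x | dist (x i) (x j) < r}) :=
        measure_mono fun x hx => Set.mem_iUnion.mpr (exists_dist_lt_of_nnDist_lt hx)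
    _ ≤ ∑ j : {j // j ≠ i}, P {x | dist (x i) (x j) < r} := measure_iUnion_fintype_le _ _
    _ ≤ ∑ _j : {j // j ≠ i}, ε :=
        Finset.sum_le_sum fun j _ => measure_pi_dist_lt_le (Ne.symm j.2) hball
    _ = (Fintype.card ι - 1 : ℕ) * ε := by simp

lemma integrable_nnDist [Nontrivial ι] {c : α} (hint : Integrable (dist · c) ν) (i : ι) :
    Integrable (fun x => nnDist x i) (Measure.pi fun _ : ι => ν) := by
  obtain ⟨j, hji⟩ := exists_ne i
  have hcoord : ∀ k : ι, Integrable (fun x : ι → α => dist (x k) c) (Measure.pi fun _ => ν) :=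
    fun k => (measurePreserving_eval _ k).integrable_comp_of_integrable (g := (dist · c)) hint
  refine ((hcoord i).add (hcoord j)).mono' (measurable_nnDist i).aestronglyMeasurable
    (ae_of_all _ fun x => ?_)
  rw [Real.norm_of_nonneg (nnDist_nonneg x i)]
  calc nnDist x i ≤ dist (x i) (x j) := nnDist_le_dist x hji
    _ ≤ dist (x i) c + dist (x j) c := dist_triangle_right _ _ _

lemma le_integral_nnDist [Nontrivial ι] {c : α} (hint : Integrable (dist · c) ν) (i : ι)
    {r : ℝ} (hr : 0 ≤ r) {ε : ℝ≥0} (hball : ∀ z, ν (ball z r) ≤ ε) :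
    r * (1 - (Fintype.card ι - 1) * ε) ≤ ∫ x, nnDist x i ∂(Measure.pi fun _ : ι => ν) := by
  set P := Measure.pi fun _ : ι => ν
  have hclose : P.real {x | nnDist x i < r} ≤ (Fintype.card ι - 1) * ε := by
    have := ENNReal.toReal_mono (by finiteness) (measure_pi_nnDist_lt_le i hball)
    rwa [ENNReal.toReal_mul, ENNReal.toReal_natCast, ENNReal.coe_toReal,
      Nat.cast_sub Fintype.card_pos, Nat.cast_one] at this
  have hfar : P.real {x | r ≤ nnDist x i} = 1 - P.real {x | nnDist x i < r} := by
    rw [← probReal_compl_eq_one_sub (measurableSet_lt (measurable_nnDist i) measurable_const)]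
    congr 1
    ext x
    simp
  calc r * (1 - (Fintype.card ι - 1) * ε) ≤ r * P.real {x | r ≤ nnDist x i} := by
        gcongr
        linarith
    _ ≤ ∫ x, nnDist x i ∂P :=
        mul_meas_ge_le_integral_of_nonneg (ae_of_all _ (nnDist_nonneg · i))
          (integrable_nnDist hint i) r

end IIDPoints

section UniformBall

variable {E : Type*} [NormedAddCommGroup E] [NormedSpace ℝ E] [MeasurableSpace E] [BorelSpace E]
  [FiniteDimensional ℝ E] (μ : Measure E) [μ.IsAddHaarMeasure]

lemma cond_closedBall_ball_le (c z : E) {R r : ℝ} (hR : 0 < R) (hr : 0 ≤ r) :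
    μ[|closedBall c R] (ball z r) ≤ ENNReal.ofReal ((r / R) ^ Module.finrank ℝ E) := by
  have hunit : μ (closedBall 0 1) ≠ 0 := (measure_closedBall_pos μ _ one_pos).ne'
  calc μ[|closedBall c R] (ball z r)
      = μ (closedBall c R ∩ ball z r) / μ (closedBall c R) := by
        rw [cond_apply measurableSet_closedBall, ENNReal.div_eq_inv_mul]
    _ ≤ μ (closedBall z r) / μ (closedBall c R) := by
        gcongr
        exact Set.inter_subset_right.trans ball_subset_closedBall
    _ = ENNReal.ofReal (r ^ Module.finrank ℝ E) / ENNReal.ofReal (R ^ Module.finrank ℝ E) := by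
        rw [Measure.addHaar_closedBall' μ z hr, Measure.addHaar_closedBall' μ c hR.le,
          ENNReal.mul_div_mul_right _ _ hunit measure_closedBall_lt_top.ne]
    _ = ENNReal.ofReal ((r / R) ^ Module.finrank ℝ E) := by
        rw [← ENNReal.ofReal_div_of_pos (by positivity), div_pow]

lemma integrable_dist_cond_closedBall (c : E) {R : ℝ} (hR : 0 < R) :
    Integrable (dist · c) μ[|closedBall c R] :=
  ((continuous_id.dist continuous_const).continuousOn.integrableOn_compact
    (isCompact_closedBall c R)).smul_measure
    (ENNReal.inv_ne_top.mpr (measure_closedBall_pos μ c hR).ne')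

end UniformBall

lemma inv_two_le_two_rpow_neg {t : ℝ} (ht : t ≤ 1) : (2 : ℝ)⁻¹ ≤ 2 ^ (-t) := by
  rw [← Real.rpow_neg_one]
  gcongr
  norm_num

/-- Lower bound on the expected nearest-neighbour distance of `n` i.i.d. points
drawn uniformly from the closed unit ball of `ℝ^d`: it is `Ω(n^{-1/d})`. -/
theorem expected_nearest_neighbour_lower (d : ℕ) (hd : 1 ≤ d) :
    ∃ c : ℝ, 0 < c ∧ ∀ n : ℕ, ∀ hn : 2 ≤ n,
      (∫ x : Fin n → EuclideanSpace ℝ (Fin d),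
          (⨅ j : {j : Fin n // j ≠ ⟨0, by omega⟩}, ‖x ⟨0, by omega⟩ - x (j : Fin n)‖)
        ∂(Measure.pi fun _ : Fin n =>
            (volume (Metric.closedBall (0 : EuclideanSpace ℝ (Fin d)) 1))⁻¹ •
              volume.restrict (Metric.closedBall (0 : EuclideanSpace ℝ (Fin d)) 1)))
      ≥ c * (n : ℝ) ^ (-(1 / (d : ℝ))) := by
  set B := closedBall (0 : EuclideanSpace ℝ (Fin d)) 1
  have : IsProbabilityMeasure volume[|B] := cond_isProbabilityMeasure_of_finite
    (measure_closedBall_pos _ _ one_pos).ne' measure_closedBall_lt_top.ne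
  refine ⟨1 / 4, by norm_num, fun n hn => ?_⟩
  have : Nontrivial (Fin n) := Fin.nontrivial_iff_two_le.mpr hn
  have hn0 : (0 : ℝ) < n := by positivity
  -- `r ^ d = 1 / (2n)`: the other `n - 1` points together fall within `r` of `x 0` with
  -- probability at most `1 / 2`.
  set r := (2 * n : ℝ) ^ (-(1 / (d : ℝ))) with hr_def
  have hrd : r ^ d = (2 * n : ℝ)⁻¹ := by
    rw [← Real.rpow_natCast, ← Real.rpow_mul (by positivity), neg_mul, one_div,
      inv_mul_cancel₀ (by positivity), Real.rpow_neg_one]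
  have hball (z) : volume[|B] (ball z r) ≤ ((2 * n : ℝ)⁻¹).toNNReal := by
    have := cond_closedBall_ball_le volume 0 z one_pos (r := r) (by positivity)
    rwa [div_one, finrank_euclideanSpace_fin, hrd] at this
  have key := le_integral_nnDist (integrable_dist_cond_closedBall volume 0 one_pos)
    (⟨0, by omega⟩ : Fin n) (by positivity) hball
  have hε : 0 ≤ (2 * n : ℝ)⁻¹ := by positivity
  simp only [nnDist, dist_eq_norm, Fintype.card_fin, Real.coe_toNNReal _ hε] at key
  have hr : (n : ℝ) ^ (-(1 / (d : ℝ))) / 2 ≤ r := by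
    rw [hr_def, Real.mul_rpow zero_le_two hn0.le, div_eq_inv_mul]
    gcongr
    exact inv_two_le_two_rpow_neg ((div_le_one (by positivity)).mpr (by exact_mod_cast hd))
  have hfrac : (1 / 2 : ℝ) ≤ 1 - (n - 1) * (2 * (n : ℝ))⁻¹ := by
    field_simp
    linarith
  calc 1 / 4 * (n : ℝ) ^ (-(1 / (d : ℝ))) = (n : ℝ) ^ (-(1 / (d : ℝ))) / 2 * (1 / 2) := by ring
    _ ≤ r * (1 - (n - 1) * (2 * (n : ℝ))⁻¹) :=
        mul_le_mul hr hfrac (by norm_num) (by positivity)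
    _ ≤ _ := key
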